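/- arXiv:1110.3603 — 3 statements merged into one kernel-verified Lean document; each statement's English description precedes it below -/
import Mathlib

section
/- For d >= 2, the function x |-> 1/|w(x)|, where w(x) = -i x_1 + ||x'||^2, is Lebesgue integrable on the unit ball of R^d. In particular 1/|w| is integrable in a neighborhood of 0. -/
noncomputable def w {n : ℕ} (x : ℝ × EuclideanSpace ℝ (Fin n)) : ℂ :=
  -Complex.I * (x.1 : ℂ) + (‖x.2‖ : ℂ) ^ 2

/-!
Since `|Im w x| = |x₁|` and `Re w x = ‖x'‖²`, we have `|w x| ≥ |x₁| ^ (3/4) * ‖x'‖ ^ (1/2)`.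
For the sup norm on `ℝ × ℝ^{d-1}` the unit ball is a product of unit balls, on which `1/|w|` is
dominated by the product of `|x₁| ^ (-3/4)` and `‖x'‖ ^ (-1/2)`; each factor is integrable on its
ball because its exponent is smaller than the dimension.
-/

open MeasureTheory Metric Module

lemma integrableOn_ball_norm_rpow_neg {E : Type*} [NormedAddCommGroup E] [NormedSpace ℝ E]
    [FiniteDimensional ℝ E] [MeasurableSpace E] [BorelSpace E] {μ : Measure E}
    [μ.IsAddHaarMeasure] (hd : 1 ≤ finrank ℝ E) {α : ℝ} (hα : α < finrank ℝ E) (r : ℝ) :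
    IntegrableOn (fun x : E => ‖x‖ ^ (-α)) (ball 0 r) μ :=
  integrableOn_ball_of_norm_le_rpow (C := 1) hd hα
    (.of_forall fun x => by rw [one_mul, Real.norm_of_nonneg (by positivity)])
    (measurable_norm.pow_const _).aestronglyMeasurable

lemma Real.rpow_mul_rpow_le_of_le {a b c p q : ℝ} (ha : 0 ≤ a) (hb : 0 ≤ b) (hac : a ≤ c)
    (hbc : b ≤ c) (hp : 0 ≤ p) (hq : 0 ≤ q) (hpq : p + q = 1) : a ^ p * b ^ q ≤ c := by
  have hc : 0 ≤ c := ha.trans hac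
  calc a ^ p * b ^ q ≤ c ^ p * c ^ q := by gcongr
    _ = c := by rw [← Real.rpow_add' hc (by rw [hpq]; norm_num), hpq, Real.rpow_one]

lemma norm_rpow_mul_norm_rpow_le_norm_w {n : ℕ} (x : ℝ × EuclideanSpace ℝ (Fin n)) :
    ‖x.1‖ ^ (3 / 4 : ℝ) * ‖x.2‖ ^ (1 / 2 : ℝ) ≤ ‖w x‖ := by
  have him : ‖x.1‖ ≤ ‖w x‖ := by
    simpa [w, ← Complex.ofReal_pow] using Complex.abs_im_le_norm (w x)
  have hre : ‖x.2‖ ^ 2 ≤ ‖w x‖ := by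
    simpa [w, ← Complex.ofReal_pow] using Complex.abs_re_le_norm (w x)
  have hsq : ‖x.2‖ ^ (1 / 2 : ℝ) = (‖x.2‖ ^ 2) ^ (1 / 4 : ℝ) := by
    rw [← Real.rpow_natCast, ← Real.rpow_mul (norm_nonneg _)]; norm_num
  rw [hsq]
  exact Real.rpow_mul_rpow_le_of_le (norm_nonneg _) (by positivity) him hre
    (by norm_num) (by norm_num) (by norm_num)

/-- For `d ≥ 2`, the function `x ↦ 1/|w x|`, `w x = -i x₁ + ‖x'‖²`, is Lebesgue
integrable on the unit ball of `ℝ^d = ℝ × ℝ^{d-1}`. -/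
theorem stmt1 {n : ℕ} (hn : 1 ≤ n) :
    MeasureTheory.IntegrableOn
      (fun x : ℝ × EuclideanSpace ℝ (Fin n) => 1 / ‖w x‖)
      (Metric.ball 0 1) MeasureTheory.volume := by
  have hdim : 1 ≤ finrank ℝ (EuclideanSpace ℝ (Fin n)) := by simpa using hn
  have : Nontrivial (EuclideanSpace ℝ (Fin n)) := nontrivial_of_finrank_pos hdim
  have hdom := (integrableOn_ball_norm_rpow_neg (μ := volume) (E := ℝ) (by simp)
    (α := 3 / 4) (by norm_num) 1).mul_prod
    (integrableOn_ball_norm_rpow_neg (μ := volume) hdim (α := 1 / 2)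
      ((by norm_num : (1 / 2 : ℝ) < 1).trans_le (mod_cast hdim)) 1)
  rw [IntegrableOn, show (0 : ℝ × EuclideanSpace ℝ (Fin n)) = (0, 0) from rfl,
    ← ball_prod_same, Measure.volume_eq_prod, ← Measure.prod_restrict]
  refine hdom.mono' (Measurable.aestronglyMeasurable (by unfold w; fun_prop)) ?_
  filter_upwards [Measure.quasiMeasurePreserving_fst.ae (ae_restrict_of_ae (Measure.ae_ne _ 0)),
    Measure.quasiMeasurePreserving_snd.ae (ae_restrict_of_ae (Measure.ae_ne _ 0))] with x h1 h2
  have hpos : 0 < ‖x.1‖ ^ (3 / 4 : ℝ) * ‖x.2‖ ^ (1 / 2 : ℝ) := by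
    have := norm_pos_iff.2 h1; have := norm_pos_iff.2 h2; positivity
  calc ‖1 / ‖w x‖‖ = 1 / ‖w x‖ := Real.norm_of_nonneg (by positivity)
    _ ≤ 1 / (‖x.1‖ ^ (3 / 4 : ℝ) * ‖x.2‖ ^ (1 / 2 : ℝ)) :=
      one_div_le_one_div_of_le hpos (norm_rpow_mul_norm_rpow_le_norm_w x)
    _ = ‖x.1‖ ^ (-(3 / 4) : ℝ) * ‖x.2‖ ^ (-(1 / 2) : ℝ) := by
      rw [Real.rpow_neg (norm_nonneg _), Real.rpow_neg (norm_nonneg _), one_div, mul_inv]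
end

section
/- Let lambda be twice continuously differentiable on a neighborhood of 0 in R^d with lambda(0)=1, gradient of lambda at 0 equal to i*m*e_1 for some m > 0 (e_1 the first basis vector), and Hessian at 0 equal to -Sigma with Sigma positive definite. Set v_0(t) = 1 - lambda(t) and w(t) = -i t_1 + ||t'||^2. Then there exist R > 0 and positive constants alpha, beta such that alpha |w(t)| <= |v_0(t)| <= beta |w(t)| for all t in B_R. -/
/-!
By Taylor's formula, `1 - λ t = M t + o(‖t‖²)` with `M t = ½ B(t, t) - i m t₁`. Since
`|z| ≍ |Re z| + |Im z|`, the model `M t` is comparable to `B(t, t) + m |t₁|`, and `w t` to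
`|t₁| + ‖t'‖²`. A positive definite form on a finite-dimensional space is coercive, so
`B(t, t) ≍ ‖t‖²`; near `0` we have `‖t'‖² ≤ ‖t‖² ≤ |t₁| + ‖t'‖²`. Hence `M`, `w` and
`|t₁| + ‖t'‖²` are all comparable near `0`, and the `o(‖t‖²)` error is absorbed.
-/

open Topology Filter Asymptotics

section Taylor

variable {E F : Type*} [NormedAddCommGroup E] [NormedSpace ℝ E]
  [NormedAddCommGroup F] [NormedSpace ℝ F]

theorem isLittleO_sub_sq_of_hasFDerivAt {g : E → F} {g' : E → E →L[ℝ] F} {x : E}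
    (hg : ∀ᶠ y in 𝓝 x, HasFDerivAt g (g' y) y) (hg' : g' =o[𝓝 x] fun y => y - x) :
    (fun y => g y - g x) =o[𝓝 x] fun y => ‖y - x‖ ^ 2 := by
  refine isLittleO_iff.2 fun ε hε => ?_
  obtain ⟨δ, hδ, hball⟩ :=
    Metric.eventually_nhds_iff_ball.1 (hg.and (isLittleO_iff.1 hg' hε))
  filter_upwards [Metric.ball_mem_nhds x hδ] with y hy
  have hsub : Metric.closedBall x ‖y - x‖ ⊆ Metric.ball x δ :=
    Metric.closedBall_subset_ball (by rwa [← dist_eq_norm])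
  have hmvt := (convex_closedBall x ‖y - x‖).norm_image_sub_le_of_norm_hasFDerivWithin_le
    (f' := g') (C := ε * ‖y - x‖)
    (fun z hz => (hball z (hsub hz)).1.hasFDerivWithinAt)
    (fun z hz => (hball z (hsub hz)).2.trans <| by
      gcongr; rwa [← dist_eq_norm])
    (Metric.mem_closedBall_self (norm_nonneg _)) (by rw [Metric.mem_closedBall, dist_eq_norm])
  rw [norm_pow, norm_norm]
  linarith

theorem ContDiffAt.isLittleO_sub_taylor_two {f : E → F} {x : E} (hf : ContDiffAt ℝ 2 f x) :
    (fun y => f y - f x - fderiv ℝ f x (y - x)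
        - (1 / 2 : ℝ) • fderiv ℝ (fderiv ℝ f) x (y - x) (y - x)) =o[𝓝 x]
      fun y => ‖y - x‖ ^ 2 := by
  set L := fderiv ℝ f x
  set Q := fderiv ℝ (fderiv ℝ f) x
  have hsymm : IsSymmSndFDerivAt ℝ f x := hf.isSymmSndFDerivAt (by simp)
  have hf' : HasFDerivAt (fderiv ℝ f) Q x :=
    ((hf.fderiv_right (m := 1) one_add_one_eq_two.le).differentiableAt one_ne_zero).hasFDerivAt
  have hdiff : ∀ᶠ y in 𝓝 x, HasFDerivAt f (fderiv ℝ f y) y := by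
    filter_upwards [hf.eventually (by simp)] with y hy
    exact (hy.differentiableAt two_ne_zero).hasFDerivAt
  have hg := isLittleO_sub_sq_of_hasFDerivAt (x := x)
    (g := fun y => f y - L (y - x) - (1 / 2 : ℝ) • Q (y - x) (y - x))
    (g' := fun y => fderiv ℝ f y - L - Q (y - x)) ?_ ?_
  · convert hg using 2 with y
    simp only [sub_self, map_zero, smul_zero, sub_zero]
    abel
  · filter_upwards [hdiff] with y hy
    have hlin : HasFDerivAt (fun y => y - x) (ContinuousLinearMap.id ℝ E) y :=
      (hasFDerivAt_id y).sub_const x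
    have hquad := ((Q.hasFDerivAt.comp y hlin).clm_apply hlin).const_smul (1 / 2 : ℝ)
    refine ((hy.sub (L.hasFDerivAt.comp y hlin)).sub hquad).congr_fderiv ?_
    ext v
    simp only [sub_apply, smul_apply, add_apply, ContinuousLinearMap.coe_comp,
      Function.comp_apply, ContinuousLinearMap.flip_apply, ContinuousLinearMap.coe_id', id_eq]
    rw [hsymm.eq v (y - x)]
    module
  · exact hasFDerivAt_iff_isLittleO.1 hf'

end Taylor

theorem isCoercive_of_pos {E : Type*} [NormedAddCommGroup E] [NormedSpace ℝ E]
    [FiniteDimensional ℝ E] (B : E →L[ℝ] E →L[ℝ] ℝ)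
    (hB : ∀ t, t ≠ 0 → 0 < B t t) : IsCoercive B := by
  rcases subsingleton_or_nontrivial E with hE | hE
  · exact ⟨1, one_pos, fun u => by simp [Subsingleton.elim u 0]⟩
  obtain ⟨x₀, hx₀, hmin⟩ := (isCompact_sphere (0 : E) 1).exists_isMinOn
    (NormedSpace.sphere_nonempty.2 zero_le_one)
    (show Continuous fun t => B t t by fun_prop).continuousOn
  refine ⟨B x₀ x₀, hB x₀ (ne_zero_of_mem_unit_sphere ⟨x₀, hx₀⟩), fun u => ?_⟩
  rcases eq_or_ne u 0 with rfl | hu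
  · simp
  have hnu : 0 < ‖u‖ := norm_pos_iff.2 hu
  have hmin_u : B x₀ x₀ ≤ B (‖u‖⁻¹ • u) (‖u‖⁻¹ • u) :=
    hmin (by simp [norm_smul, hnu.ne'])
  simp only [map_smul, smul_apply, smul_eq_mul] at hmin_u
  calc B x₀ x₀ * ‖u‖ * ‖u‖ ≤ ‖u‖⁻¹ * (‖u‖⁻¹ * B u u) * ‖u‖ * ‖u‖ := by gcongr
    _ = B u u := by field_simp

theorem Complex.isTheta_abs_re_add_abs_im {α : Type*} {l : Filter α} (f : α → ℂ) :
    f =Θ[l] fun x => |(f x).re| + |(f x).im| := by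
  refine ⟨.of_bound 1 (.of_forall fun x => ?_), .of_bound 2 (.of_forall fun x => ?_)⟩
  · rw [one_mul, Real.norm_of_nonneg (by positivity)]
    exact Complex.norm_le_abs_re_add_abs_im _
  · rw [Real.norm_of_nonneg (by positivity)]
    linarith [Complex.abs_re_le_norm (f x), Complex.abs_im_le_norm (f x)]

theorem Asymptotics.IsTheta.exists_pos_bounds_on_ball {X E' F' : Type*} [PseudoMetricSpace X]
    [SeminormedAddCommGroup E'] [SeminormedAddCommGroup F'] {f : X → E'} {g : X → F'} {x : X}
    (h : f =Θ[𝓝 x] g) :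
    ∃ R > (0 : ℝ), ∃ α > (0 : ℝ), ∃ β > (0 : ℝ), ∀ t ∈ Metric.ball x R,
      α * ‖g t‖ ≤ ‖f t‖ ∧ ‖f t‖ ≤ β * ‖g t‖ := by
  obtain ⟨β, hβ, hfg⟩ := h.1.exists_pos
  obtain ⟨C, hC, hgf⟩ := h.2.exists_pos
  obtain ⟨R, hR, hball⟩ := Metric.eventually_nhds_iff_ball.1 (hfg.bound.and hgf.bound)
  refine ⟨R, hR, C⁻¹, inv_pos.2 hC, β, hβ, fun t ht => ⟨?_, (hball t ht).1⟩⟩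
  rw [inv_mul_le_iff₀ hC]
  exact (hball t ht).2

section Gauge

variable {E : Type*} [SeminormedAddCommGroup E]

def parabolicGauge (t : ℝ × E) : ℝ := |t.1| + ‖t.2‖ ^ 2

theorem parabolicGauge_nonneg (t : ℝ × E) : 0 ≤ parabolicGauge t := by
  unfold parabolicGauge; positivity

theorem sq_norm_le_parabolicGauge {t : ℝ × E} (ht : ‖t‖ ≤ 1) : ‖t‖ ^ 2 ≤ parabolicGauge t := by
  have h1 : |t.1| ≤ 1 := (norm_fst_le t).trans ht
  have h2 : |t.1| ^ 2 ≤ |t.1| := by nlinarith [abs_nonneg t.1]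
  rw [parabolicGauge, Prod.norm_def, Real.norm_eq_abs]
  rcases le_total |t.1| ‖t.2‖ with h | h
  · rw [max_eq_right h]; linarith [abs_nonneg t.1]
  · rw [max_eq_left h]; linarith [sq_nonneg ‖t.2‖]

theorem isBigO_sq_norm_parabolicGauge :
    (fun t : ℝ × E => ‖t‖ ^ 2) =O[𝓝 0] parabolicGauge := by
  refine .of_bound 1 ?_
  filter_upwards [Metric.closedBall_mem_nhds (0 : ℝ × E) one_pos] with t ht
  rw [mem_closedBall_zero_iff] at ht
  rw [one_mul, Real.norm_of_nonneg (by positivity),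
    Real.norm_of_nonneg (parabolicGauge_nonneg t)]
  exact sq_norm_le_parabolicGauge ht

theorem isTheta_add_mul_abs_fst_parabolicGauge {Q : ℝ × E → ℝ} {c m : ℝ} (hc : 0 < c)
    (hm : 0 < m) (hQc : ∀ t, c * ‖t‖ ^ 2 ≤ Q t) (hQ : Q =O[𝓝 0] fun t => ‖t‖ ^ 2) :
    (fun t => Q t + m * |t.1|) =Θ[𝓝 0] parabolicGauge := by
  have hQ0 (t : ℝ × E) : 0 ≤ Q t := (by positivity : 0 ≤ c * ‖t‖ ^ 2).trans (hQc t)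
  refine ⟨(hQ.trans isBigO_sq_norm_parabolicGauge).add (.of_bound m (.of_forall fun t => ?_)),
    .of_bound (c⁻¹ + m⁻¹) (.of_forall fun t => ?_)⟩
  · rw [Real.norm_of_nonneg (by positivity), Real.norm_of_nonneg (parabolicGauge_nonneg t),
      parabolicGauge]
    nlinarith [sq_nonneg ‖t.2‖]
  · have hsnd : ‖t.2‖ ^ 2 ≤ c⁻¹ * Q t := by
      rw [le_inv_mul_iff₀ hc]
      exact (mul_le_mul_of_nonneg_left (pow_le_pow_left₀ (norm_nonneg _) (norm_snd_le t) 2)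
        hc.le).trans (hQc t)
    have hfst : |t.1| = m⁻¹ * (m * |t.1|) := by field_simp
    have hcross : 0 ≤ c⁻¹ * (m * |t.1|) + m⁻¹ * Q t := by have := hQ0 t; positivity
    rw [Real.norm_of_nonneg (parabolicGauge_nonneg t),
      Real.norm_of_nonneg (by have := hQ0 t; positivity), parabolicGauge]
    linarith

theorem isTheta_half_apply_self_sub_I_mul_fst [NormedSpace ℝ E]
    {B : ℝ × E →L[ℝ] ℝ × E →L[ℝ] ℝ} (hB : IsCoercive B) {m : ℝ} (hm : 0 < m) :
    (fun t => ((2⁻¹ * B t t : ℝ) : ℂ) - Complex.I * ((m * t.1 : ℝ) : ℂ)) =Θ[𝓝 0]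
      parabolicGauge := by
  obtain ⟨c, hc, hcB⟩ := hB
  have hquad : (fun t => 2⁻¹ * B t t) =O[𝓝 0] fun t => ‖t‖ ^ 2 :=
    (IsBigO.of_bound ‖B‖ (.of_forall fun t => by
      simpa [pow_two, mul_assoc] using B.le_opNorm₂ t t)).const_mul_left _
  have h := isTheta_add_mul_abs_fst_parabolicGauge (Q := fun t => 2⁻¹ * B t t)
    (half_pos hc) hm (fun t => by nlinarith [hcB t]) hquad
  have hB0 (t : ℝ × E) : 0 ≤ B t t := (by positivity : 0 ≤ c * ‖t‖ * ‖t‖).trans (hcB t)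
  refine (Complex.isTheta_abs_re_add_abs_im _).trans
    ⟨h.1.congr_left fun t => ?_, h.2.congr_right fun t => ?_⟩ <;>
  simp [abs_mul, abs_of_pos hm, abs_of_nonneg (hB0 t)]

end Gauge

theorem w_re {n : ℕ} (t : ℝ × EuclideanSpace ℝ (Fin n)) : (w t).re = ‖t.2‖ ^ 2 := by
  simp [w, ← Complex.ofReal_pow]

theorem w_im {n : ℕ} (t : ℝ × EuclideanSpace ℝ (Fin n)) : (w t).im = -t.1 := by
  simp [w, ← Complex.ofReal_pow]

theorem isTheta_w_parabolicGauge {n : ℕ} {l : Filter (ℝ × EuclideanSpace ℝ (Fin n))} :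
    w =Θ[l] parabolicGauge := by
  have hgauge : (parabolicGauge : ℝ × EuclideanSpace ℝ (Fin n) → ℝ) =
      fun t => |(w t).re| + |(w t).im| := funext fun t => by
    rw [w_re, w_im, abs_neg, abs_of_nonneg (sq_nonneg _), parabolicGauge, add_comm]
  rw [hgauge]
  exact Complex.isTheta_abs_re_add_abs_im w

theorem stmt3_general {n : ℕ} (lam : ℝ × EuclideanSpace ℝ (Fin n) → ℂ)
    (m : ℝ) (hm : 0 < m)
    (hC2 : ContDiffAt ℝ 2 lam 0)
    (h0 : lam 0 = 1)
    (hgrad : ∀ t : ℝ × EuclideanSpace ℝ (Fin n),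
      fderiv ℝ lam 0 t = Complex.I * (m : ℂ) * (t.1 : ℂ))
    (B : (ℝ × EuclideanSpace ℝ (Fin n)) →L[ℝ] (ℝ × EuclideanSpace ℝ (Fin n)) →L[ℝ] ℝ)
    (hpos : ∀ t : ℝ × EuclideanSpace ℝ (Fin n), t ≠ 0 → 0 < B t t)
    (hhess : ∀ s t : ℝ × EuclideanSpace ℝ (Fin n),
      fderiv ℝ (fderiv ℝ lam) 0 s t = (-(B s t) : ℝ)) :
    ∃ R > (0 : ℝ), ∃ α > (0 : ℝ), ∃ β > (0 : ℝ),
      ∀ t ∈ Metric.ball (0 : ℝ × EuclideanSpace ℝ (Fin n)) R,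
        α * ‖w t‖ ≤ ‖1 - lam t‖ ∧
        ‖1 - lam t‖ ≤ β * ‖w t‖ := by
  set M : ℝ × EuclideanSpace ℝ (Fin n) → ℂ :=
    fun t => ((2⁻¹ * B t t : ℝ) : ℂ) - Complex.I * ((m * t.1 : ℝ) : ℂ)
  have hM : M =Θ[𝓝 0] parabolicGauge :=
    isTheta_half_apply_self_sub_I_mul_fst (isCoercive_of_pos B hpos) hm
  have hremainder : ((fun t => 1 - lam t) - M) =o[𝓝 0] parabolicGauge := by
    refine (hC2.isLittleO_sub_taylor_two.neg_left.congr_left fun t => ?_).trans_isBigO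
      (by simpa using isBigO_sq_norm_parabolicGauge)
    rw [sub_zero, h0, hgrad, hhess, Complex.real_smul]
    push_cast [M, Pi.sub_apply]
    ring
  have hv : (fun t => 1 - lam t) =Θ[𝓝 0] w := by
    have h := hM.add_isLittleO hremainder
    rw [add_sub_cancel] at h
    exact h.trans isTheta_w_parabolicGauge.symm
  exact hv.exists_pos_bounds_on_ball

/-- If `λ` is C² near `0` with `λ 0 = 1`, gradient `i m e₁` (`m > 0`) and Hessian `-Σ`
with `Σ` positive definite, then with `v₀ = 1 - λ` and `w t = -i t₁ + ‖t'‖²`,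
there are `R, α, β > 0` with `α |w t| ≤ |v₀ t| ≤ β |w t|` on `B_R`. -/
theorem stmt3 {n : ℕ} (hn : 1 ≤ n) (lam : ℝ × EuclideanSpace ℝ (Fin n) → ℂ)
    (m : ℝ) (hm : 0 < m)
    (hC2 : ContDiffAt ℝ 2 lam 0)
    (h0 : lam 0 = 1)
    (hgrad : ∀ t : ℝ × EuclideanSpace ℝ (Fin n),
      fderiv ℝ lam 0 t = Complex.I * (m : ℂ) * (t.1 : ℂ))
    (B : (ℝ × EuclideanSpace ℝ (Fin n)) →L[ℝ] (ℝ × EuclideanSpace ℝ (Fin n)) →L[ℝ] ℝ)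
    (hsymm : ∀ s t, B s t = B t s)
    (hpos : ∀ t : ℝ × EuclideanSpace ℝ (Fin n), t ≠ 0 → 0 < B t t)
    (hhess : ∀ s t : ℝ × EuclideanSpace ℝ (Fin n),
      fderiv ℝ (fderiv ℝ lam) 0 s t = (-(B s t) : ℝ)) :
    ∃ R > (0 : ℝ), ∃ α > (0 : ℝ), ∃ β > (0 : ℝ),
      ∀ t ∈ Metric.ball (0 : ℝ × EuclideanSpace ℝ (Fin n)) R,
        α * ‖w t‖ ≤ ‖1 - lam t‖ ∧
        ‖1 - lam t‖ ≤ β * ‖w t‖ :=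
  stmt3_general lam m hm hC2 h0 hgrad B hpos hhess
end

section
/- Under the same setting, if moreover m > 2 and all first and second partial derivatives of theta vanish at 0 (together with theta(0) = 0), then with nu = min(m-2, 1) there exists D > 0 such that for all large k: every partial derivative of theta_k = theta ∘ D_k of order <= floor(m) is bounded by D * 2^{-k(2+nu)} on tilde{Gamma}_0, and every partial derivative of order floor(m) has tau-Hölder seminorm at most D * 2^{-k(2+nu)} on tilde{Gamma}_0. -/
/-- The anisotropic dyadic scaling `D_k(x₁, x') = (x₁/4^k, x'/2^k)`. -/
noncomputable def Dk {n : ℕ} (k : ℕ) (x : ℝ × EuclideanSpace ℝ (Fin n)) :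
    ℝ × EuclideanSpace ℝ (Fin n) :=
  (x.1 / (4 : ℝ) ^ k, ((2 : ℝ) ^ k)⁻¹ • x.2)

/-- `Γ̃₀ = {x : 1/8 ≤ |w x| ≤ 2}`. -/
def GammaTilde0 {n : ℕ} : Set (ℝ × EuclideanSpace ℝ (Fin n)) :=
  {x | (1 / 8 : ℝ) ≤ ‖w x‖ ∧ ‖w x‖ ≤ 2}

/-!
The derivatives of `θ` of order `≤ 2` vanish at `0`, so the mean value inequality along segments
from `0`, applied repeatedly starting from a bound `‖D^pθ y‖ ≤ C‖y‖^ν` on a top derivative,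
gives `‖D^jθ y‖ ≤ C‖y‖^(2+ν-j)` for `j ≤ 2`. The top bound is the Hölder condition (`p = 2`,
`ν = m - 2`) when `⌊m⌋ = 2`, and the boundedness of `D³θ` (`p = 3`, `ν = 0`) otherwise.

The dilation `D_k` is linear with operator norm `≤ 2^{-k}`, so
`‖D^i(θ ∘ D_k) x‖ ≤ ‖D^iθ(D_k x)‖ 2^{-ki}`. On `Γ̃₀` we have `‖D_k x‖ ≤ 2·2^{-k}`, which makes
this `O(2^{-k(2+ν)})` for `i ≤ 2`; for `i ≥ 3` the factor `2^{-ki}` alone suffices, and the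
Hölder quotient of order `⌊m⌋` gains the factor `2^{-km}`.
-/

open Metric Set

section Flat

variable {E F : Type*} [NormedAddCommGroup E] [NormedSpace ℝ E]
  [NormedAddCommGroup F] [NormedSpace ℝ F] {f : E → F} {s : Set E}

theorem norm_le_mul_norm_rpow_of_norm_fderivWithin_le (hs : Convex ℝ s) (h0 : 0 ∈ s)
    (hf : DifferentiableOn ℝ f s) (hf0 : f 0 = 0) {C ν : ℝ} (hC : 0 ≤ C) (hν : 0 ≤ ν)
    (hf' : ∀ z ∈ s, ‖fderivWithin ℝ f s z‖ ≤ C * ‖z‖ ^ ν) {y : E} (hy : y ∈ s) :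
    ‖f y‖ ≤ C * ‖y‖ ^ (ν + 1) := by
  have hseg : segment ℝ 0 y ⊆ s ∩ closedBall 0 ‖y‖ :=
    (hs.inter (convex_closedBall 0 ‖y‖)).segment_subset ⟨h0, by simp⟩
      ⟨hy, by simp⟩
  have hmvt := (convex_segment (0 : E) y).norm_image_sub_le_of_norm_hasFDerivWithin_le
    (fun z hz => ((hf z (hseg hz).1).hasFDerivWithinAt).mono (hseg.trans inter_subset_left))
    (fun z hz => (hf' z (hseg hz).1).trans <| mul_le_mul_of_nonneg_left
      (Real.rpow_le_rpow (norm_nonneg z) (mem_closedBall_zero_iff.1 (hseg hz).2) hν) hC)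
    (left_mem_segment ℝ 0 y) (right_mem_segment ℝ 0 y)
  rw [hf0, sub_zero, sub_zero] at hmvt
  rw [Real.rpow_add_one' (norm_nonneg y) (by positivity), ← mul_assoc]
  exact hmvt

theorem norm_iteratedFDerivWithin_le_of_flat {N p : ℕ} (hf : ContDiffOn ℝ N f s)
    (hs : Convex ℝ s) (hs' : UniqueDiffOn ℝ s) (h0 : 0 ∈ s) (hpN : p ≤ N)
    (hflat : ∀ j < p, iteratedFDerivWithin ℝ j f s 0 = 0) {C ν : ℝ} (hC : 0 ≤ C) (hν : 0 ≤ ν)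
    (htop : ∀ z ∈ s, ‖iteratedFDerivWithin ℝ p f s z‖ ≤ C * ‖z‖ ^ ν) {j : ℕ} (hj : j ≤ p) :
    ∀ y ∈ s, ‖iteratedFDerivWithin ℝ j f s y‖ ≤ C * ‖y‖ ^ (ν + (p - j : ℕ)) := by
  induction hj using Nat.decreasingInduction with
  | self => simpa using htop
  | of_succ j hjp ih =>
    intro y hy
    have hdiff : DifferentiableOn ℝ (iteratedFDerivWithin ℝ j f s) s :=
      hf.differentiableOn_iteratedFDerivWithin (by exact_mod_cast hjp.trans_le hpN) hs'
    have hbound : ∀ z ∈ s, ‖fderivWithin ℝ (iteratedFDerivWithin ℝ j f s) s z‖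
        ≤ C * ‖z‖ ^ (ν + (p - (j + 1) : ℕ)) := fun z hz => by
      rw [norm_fderivWithin_iteratedFDerivWithin]; exact ih z hz
    convert norm_le_mul_norm_rpow_of_norm_fderivWithin_le hs h0 hdiff (hflat j hjp) hC
      (by positivity) hbound hy using 3
    rw [show p - j = p - (j + 1) + 1 by omega]; push_cast; ring

theorem exists_norm_iteratedFDerivWithin_le_of_flat {m : ℝ} {p : ℕ} (hpm : (p : ℝ) < m)
    (hf : ContDiffOn ℝ ⌊m⌋₊ f s) (hs : Convex ℝ s) (hs' : UniqueDiffOn ℝ s) (h0 : 0 ∈ s)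
    (hbdd : ∀ i ≤ ⌊m⌋₊, ∃ M : ℝ, ∀ x ∈ s, ‖iteratedFDerivWithin ℝ i f s x‖ ≤ M)
    (hHol : ∃ H : ℝ, ∀ x ∈ s, ∀ y ∈ s,
      ‖iteratedFDerivWithin ℝ ⌊m⌋₊ f s x - iteratedFDerivWithin ℝ ⌊m⌋₊ f s y‖
        ≤ H * ‖x - y‖ ^ (m - ⌊m⌋₊))
    (hflat : ∀ j ≤ p, iteratedFDerivWithin ℝ j f s 0 = 0) :
    ∃ C ≥ 0, ∀ j ≤ p, ∀ y ∈ s,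
      ‖iteratedFDerivWithin ℝ j f s y‖ ≤ C * ‖y‖ ^ (min (m - p) 1 + (p - j : ℕ)) := by
  have hpN : p ≤ ⌊m⌋₊ := Nat.le_floor hpm.le
  rcases hpN.eq_or_lt with hpN | hpN
  · subst hpN
    obtain ⟨H, hH⟩ := hHol
    have hν : min (m - ⌊m⌋₊) 1 = m - ⌊m⌋₊ :=
      min_eq_left (by linarith [Nat.lt_floor_add_one m])
    refine ⟨max H 0, le_max_right _ _, fun j hj => norm_iteratedFDerivWithin_le_of_flat hf
      hs hs' h0 le_rfl (fun j hj => hflat j hj.le) (le_max_right _ _) (by linarith) ?_ hj⟩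
    intro z hz
    have := hH z hz 0 h0
    rw [hflat _ le_rfl, sub_zero, sub_zero] at this
    rw [hν]
    exact this.trans (mul_le_mul_of_nonneg_right (le_max_left _ _) (by positivity))
  · obtain ⟨M, hM⟩ := hbdd (p + 1) hpN
    have hν : min (m - p) 1 = 1 := min_eq_right (by
      have : ((p + 1 : ℕ) : ℝ) ≤ m :=
        (Nat.cast_le.2 hpN).trans (Nat.floor_le (p.cast_nonneg.trans hpm.le))
      push_cast at this; linarith)
    refine ⟨max M 0, le_max_right _ _, fun j hj y hy => ?_⟩
    convert norm_iteratedFDerivWithin_le_of_flat hf hs hs' h0 hpN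
      (fun j hj => hflat j (Nat.lt_succ_iff.1 hj)) (le_max_right _ _) le_rfl
      (fun z hz => by rw [Real.rpow_zero, mul_one]; exact (hM z hz).trans (le_max_left _ _))
      (by omega : j ≤ p + 1) y hy using 3
    rw [hν, show p + 1 - j = p - j + 1 by omega]; push_cast; ring

theorem exists_forall_norm_iteratedFDerivWithin_le {N : ℕ}
    (hbdd : ∀ i ≤ N, ∃ M : ℝ, ∀ x ∈ s, ‖iteratedFDerivWithin ℝ i f s x‖ ≤ M) :
    ∃ B ≥ 0, ∀ i ≤ N, ∀ x ∈ s, ‖iteratedFDerivWithin ℝ i f s x‖ ≤ B := by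
  choose M hM using hbdd
  obtain ⟨B, hB⟩ := Finite.exists_le fun i : Fin (N + 1) => |M i (Nat.lt_succ_iff.1 i.2)|
  exact ⟨B, (abs_nonneg _).trans (hB 0), fun i hi x hx =>
    (hM i hi x hx).trans ((le_abs_self _).trans (hB ⟨i, Nat.lt_succ_iff.2 hi⟩))⟩

end Flat

section Comp

variable {E F G : Type*} [NormedAddCommGroup E] [NormedSpace ℝ E]
  [NormedAddCommGroup F] [NormedSpace ℝ F] [NormedAddCommGroup G] [NormedSpace ℝ G]
  {f : E → F} {s : Set E} {N i : ℕ}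

theorem ContinuousMultilinearMap.norm_compContinuousLinearMap_const_le
    (A : ContinuousMultilinearMap ℝ (fun _ : Fin i => E) F) (L : G →L[ℝ] E) :
    ‖A.compContinuousLinearMap fun _ => L‖ ≤ ‖A‖ * ‖L‖ ^ i := by
  simpa using A.norm_compContinuousLinearMap_le fun _ => L

theorem norm_iteratedFDerivWithin_comp_continuousLinearMap_le (L : G →L[ℝ] E)
    (hf : ContDiffOn ℝ N f s) (hs : UniqueDiffOn ℝ s) (hLs : UniqueDiffOn ℝ (L ⁻¹' s))
    {x : G} (hx : L x ∈ s) (hi : i ≤ N) :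
    ‖iteratedFDerivWithin ℝ i (f ∘ L) (L ⁻¹' s) x‖
      ≤ ‖iteratedFDerivWithin ℝ i f s (L x)‖ * ‖L‖ ^ i := by
  rw [L.iteratedFDerivWithin_comp_right hf hs hLs hx (by exact_mod_cast hi)]
  exact ContinuousMultilinearMap.norm_compContinuousLinearMap_const_le _ L

theorem norm_sub_iteratedFDerivWithin_comp_continuousLinearMap_le (L : G →L[ℝ] E)
    (hf : ContDiffOn ℝ N f s) (hs : UniqueDiffOn ℝ s) (hLs : UniqueDiffOn ℝ (L ⁻¹' s))
    {x y : G} (hx : L x ∈ s) (hy : L y ∈ s) (hi : i ≤ N) :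
    ‖iteratedFDerivWithin ℝ i (f ∘ L) (L ⁻¹' s) x - iteratedFDerivWithin ℝ i (f ∘ L) (L ⁻¹' s) y‖
      ≤ ‖iteratedFDerivWithin ℝ i f s (L x) - iteratedFDerivWithin ℝ i f s (L y)‖ * ‖L‖ ^ i := by
  rw [L.iteratedFDerivWithin_comp_right hf hs hLs hx (by exact_mod_cast hi),
    L.iteratedFDerivWithin_comp_right hf hs hLs hy (by exact_mod_cast hi)]
  exact ContinuousMultilinearMap.norm_compContinuousLinearMap_const_le
    (iteratedFDerivWithin ℝ i f s (L x) - iteratedFDerivWithin ℝ i f s (L y)) L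

end Comp

theorem inv_two_pow_rpow (k : ℕ) (a : ℝ) : ((2 : ℝ) ^ k)⁻¹ ^ a = 2 ^ (-(k : ℝ) * a) := by
  rw [Real.inv_rpow (by positivity), ← Real.rpow_natCast, ← Real.rpow_mul (by norm_num),
    neg_mul, Real.rpow_neg (by norm_num)]

theorem rpow_mul_pow_le_of_le_two_mul {q t e : ℝ} (hq : 0 < q) (ht : 0 ≤ t) (htq : t ≤ 2 * q)
    (he : 0 ≤ e) (he3 : e ≤ 3) (i : ℕ) : t ^ e * q ^ i ≤ 8 * q ^ (e + i) := by
  have h2e : (2 : ℝ) ^ e ≤ 8 := by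
    have := Real.rpow_le_rpow_of_exponent_le (by norm_num : (1 : ℝ) ≤ 2) he3
    rw [show (3 : ℝ) = (3 : ℕ) by norm_num, Real.rpow_natCast] at this
    linarith [show (2 : ℝ) ^ 3 = 8 by norm_num]
  calc t ^ e * q ^ i ≤ (2 * q) ^ e * q ^ i := by gcongr
    _ = 2 ^ e * q ^ (e + i) := by
      rw [Real.mul_rpow (by norm_num) hq.le, Real.rpow_add hq, Real.rpow_natCast]; ring
    _ ≤ 8 * q ^ (e + i) := by gcongr

section Scaling

variable {n : ℕ}

theorem norm_Dk_le (k : ℕ) (x : ℝ × EuclideanSpace ℝ (Fin n)) :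
    ‖Dk k x‖ ≤ ((2 : ℝ) ^ k)⁻¹ * ‖x‖ := by
  have h42 : ((4 : ℝ) ^ k)⁻¹ ≤ ((2 : ℝ) ^ k)⁻¹ :=
    inv_anti₀ (by positivity) (pow_le_pow_left₀ (by norm_num) (by norm_num) k)
  refine max_le ?_ ?_
  · rw [Dk, norm_div, norm_pow, Real.norm_ofNat, div_eq_inv_mul]
    exact mul_le_mul h42 (norm_fst_le x) (norm_nonneg _) (by positivity)
  · rw [Dk, norm_smul, norm_inv, norm_pow, Real.norm_ofNat]
    exact mul_le_mul_of_nonneg_left (norm_snd_le x) (by positivity)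

noncomputable def DkL (n k : ℕ) :
    (ℝ × EuclideanSpace ℝ (Fin n)) →L[ℝ] ℝ × EuclideanSpace ℝ (Fin n) :=
  (((4 : ℝ) ^ k)⁻¹ • ContinuousLinearMap.id ℝ ℝ).prodMap
    (((2 : ℝ) ^ k)⁻¹ • ContinuousLinearMap.id ℝ (EuclideanSpace ℝ (Fin n)))

@[simp]
theorem coe_DkL (k : ℕ) : ⇑(DkL n k) = Dk k := by
  ext x <;> simp [DkL, Dk, div_eq_inv_mul]

theorem norm_DkL_le (k : ℕ) : ‖DkL n k‖ ≤ ((2 : ℝ) ^ k)⁻¹ :=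
  (DkL n k).opNorm_le_bound (by positivity) fun x => by simpa using norm_Dk_le k x

theorem norm_le_two_of_mem_GammaTilde0 {x : ℝ × EuclideanSpace ℝ (Fin n)}
    (hx : x ∈ GammaTilde0) : ‖x‖ ≤ 2 := by
  have him : |x.1| ≤ 2 := by
    simpa [w, ← Complex.ofReal_pow] using (Complex.abs_im_le_norm (w x)).trans hx.2
  have hre : ‖x.2‖ ^ 2 ≤ 2 := by
    simpa [w, ← Complex.ofReal_pow] using (Complex.re_le_norm (w x)).trans hx.2
  exact max_le him (by nlinarith [norm_nonneg x.2])

variable {F : Type*} [NormedAddCommGroup F] [NormedSpace ℝ F]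
  {θ : ℝ × EuclideanSpace ℝ (Fin n) → F} {s : Set (ℝ × EuclideanSpace ℝ (Fin n))} {N : ℕ}

theorem norm_iteratedFDerivWithin_comp_Dk_le (hs : IsOpen s) (hθ : ContDiffOn ℝ N θ s)
    {C B ν : ℝ} (hC : 0 ≤ C) (hB : 0 ≤ B) (hν0 : 0 ≤ ν) (hν1 : ν ≤ 1)
    (hflat : ∀ j ≤ 2, ∀ y ∈ s, ‖iteratedFDerivWithin ℝ j θ s y‖ ≤ C * ‖y‖ ^ (ν + (2 - j : ℕ)))
    (hbdd : ∀ i ≤ N, ∀ y ∈ s, ‖iteratedFDerivWithin ℝ i θ s y‖ ≤ B)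
    {k : ℕ} {x : ℝ × EuclideanSpace ℝ (Fin n)} (hx : x ∈ GammaTilde0) (hkx : Dk k x ∈ s)
    {i : ℕ} (hi : i ≤ N) :
    ‖iteratedFDerivWithin ℝ i (fun y => θ (Dk k y)) (Dk k ⁻¹' s) x‖
      ≤ (8 * C + B) * 2 ^ (-(k : ℝ) * (2 + ν)) := by
  set q : ℝ := ((2 : ℝ) ^ k)⁻¹
  have hq : 0 < q := by positivity
  have hcomp := norm_iteratedFDerivWithin_comp_continuousLinearMap_le (DkL n k) hθ
    hs.uniqueDiffOn (hs.preimage (DkL n k).continuous).uniqueDiffOn (by simpa using hkx) hi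
  simp only [coe_DkL] at hcomp
  refine hcomp.trans <| (mul_le_mul_of_nonneg_left (pow_le_pow_left₀ (norm_nonneg _)
    (norm_DkL_le k) i) (norm_nonneg _)).trans ?_
  rw [← inv_two_pow_rpow]
  rcases le_or_gt i 2 with hi2 | hi2
  · have hkx2 : ‖Dk k x‖ ≤ 2 * q := (norm_Dk_le k x).trans <| by
      linarith [mul_le_mul_of_nonneg_left (norm_le_two_of_mem_GammaTilde0 hx) hq.le]
    have hexp : ν + ((2 - i : ℕ) : ℝ) + i = 2 + ν := by
      rw [Nat.cast_sub hi2]; push_cast; ring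
    calc ‖iteratedFDerivWithin ℝ i θ s (Dk k x)‖ * q ^ i
        ≤ C * ‖Dk k x‖ ^ (ν + (2 - i : ℕ)) * q ^ i := by gcongr; exact hflat i hi2 _ hkx
      _ ≤ C * (8 * q ^ (2 + ν)) := by
        have he3 : ν + ((2 - i : ℕ) : ℝ) ≤ 3 := by
          have : ((2 - i : ℕ) : ℝ) ≤ 2 := by exact_mod_cast Nat.sub_le 2 i
          linarith
        rw [mul_assoc, ← hexp]
        exact mul_le_mul_of_nonneg_left (rpow_mul_pow_le_of_le_two_mul hq (norm_nonneg _) hkx2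
          (by positivity) he3 i) hC
      _ ≤ (8 * C + B) * q ^ (2 + ν) := by nlinarith [Real.rpow_pos_of_pos hq (2 + ν)]
  · have hq1 : q ≤ 1 := inv_le_one_of_one_le₀ (one_le_pow₀ (by norm_num))
    have hexp : 2 + ν ≤ i := by
      have : (3 : ℝ) ≤ i := by exact_mod_cast hi2
      linarith
    calc ‖iteratedFDerivWithin ℝ i θ s (Dk k x)‖ * q ^ i ≤ B * q ^ i :=
          mul_le_mul_of_nonneg_right (hbdd i hi _ hkx) (by positivity)
      _ = B * q ^ (i : ℝ) := by rw [Real.rpow_natCast]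
      _ ≤ B * q ^ (2 + ν) :=
          mul_le_mul_of_nonneg_left (Real.rpow_le_rpow_of_exponent_ge hq hq1 hexp) hB
      _ ≤ (8 * C + B) * q ^ (2 + ν) := by nlinarith [Real.rpow_pos_of_pos hq (2 + ν)]

theorem norm_sub_iteratedFDerivWithin_comp_Dk_le (hs : IsOpen s) (hθ : ContDiffOn ℝ N θ s)
    {H τ a : ℝ} (hH : 0 ≤ H) (hτ : 0 ≤ τ) (ha : a ≤ τ + N)
    (hHol : ∀ x ∈ s, ∀ y ∈ s, ‖iteratedFDerivWithin ℝ N θ s x - iteratedFDerivWithin ℝ N θ s y‖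
      ≤ H * ‖x - y‖ ^ τ)
    {k : ℕ} {x y : ℝ × EuclideanSpace ℝ (Fin n)} (hkx : Dk k x ∈ s) (hky : Dk k y ∈ s) :
    ‖iteratedFDerivWithin ℝ N (fun z => θ (Dk k z)) (Dk k ⁻¹' s) x
        - iteratedFDerivWithin ℝ N (fun z => θ (Dk k z)) (Dk k ⁻¹' s) y‖
      ≤ H * 2 ^ (-(k : ℝ) * a) * ‖x - y‖ ^ τ := by
  set q : ℝ := ((2 : ℝ) ^ k)⁻¹
  have hq : 0 < q := by positivity
  have hq1 : q ≤ 1 := inv_le_one_of_one_le₀ (one_le_pow₀ (by norm_num))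
  have hcomp := norm_sub_iteratedFDerivWithin_comp_continuousLinearMap_le (DkL n k) hθ
    hs.uniqueDiffOn (hs.preimage (DkL n k).continuous).uniqueDiffOn (by simpa using hkx)
    (by simpa using hky) le_rfl
  simp only [coe_DkL] at hcomp
  have hkxy : ‖Dk k x - Dk k y‖ ≤ q * ‖x - y‖ := by
    rw [← coe_DkL, ← map_sub, coe_DkL]
    exact norm_Dk_le k (x - y)
  rw [← inv_two_pow_rpow]
  calc _ ≤ _ := hcomp
    _ ≤ H * (q * ‖x - y‖) ^ τ * q ^ N := by
      gcongr
      · exact (hHol _ hkx _ hky).trans (by gcongr)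
      · exact norm_DkL_le k
    _ = H * q ^ (τ + N) * ‖x - y‖ ^ τ := by
      rw [Real.mul_rpow hq.le (norm_nonneg _), Real.rpow_add hq, Real.rpow_natCast]; ring
    _ ≤ H * q ^ a * ‖x - y‖ ^ τ := by
      gcongr ?_ * _
      exact mul_le_mul_of_nonneg_left (Real.rpow_le_rpow_of_exponent_ge hq hq1 ha) hH

end Scaling

theorem stmt16_general {n : ℕ} (r : ℝ) (hr : 0 < r) (m : ℝ) (hm : 2 < m)
    (θ : ℝ × EuclideanSpace ℝ (Fin n) → ℂ)
    (hreg : ContDiffOn ℝ (⌊m⌋₊ : ℕ) θ (Metric.ball 0 r))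
    (hbdd : ∀ i ≤ ⌊m⌋₊, ∃ M : ℝ,
      ∀ x ∈ Metric.ball (0 : ℝ × EuclideanSpace ℝ (Fin n)) r,
        ‖iteratedFDerivWithin ℝ i θ (Metric.ball 0 r) x‖ ≤ M)
    (hHol : ∃ H : ℝ, ∀ x ∈ Metric.ball (0 : ℝ × EuclideanSpace ℝ (Fin n)) r,
      ∀ y ∈ Metric.ball (0 : ℝ × EuclideanSpace ℝ (Fin n)) r,
        ‖iteratedFDerivWithin ℝ (⌊m⌋₊) θ (Metric.ball 0 r) x
          - iteratedFDerivWithin ℝ (⌊m⌋₊) θ (Metric.ball 0 r) y‖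
          ≤ H * ‖x - y‖ ^ (m - ⌊m⌋₊))
    (hθ0 : θ 0 = 0)
    (hθ1 : fderivWithin ℝ θ (Metric.ball 0 r) 0 = 0)
    (hθ2 : iteratedFDerivWithin ℝ 2 θ (Metric.ball 0 r) 0 = 0) :
    ∃ D > (0 : ℝ), ∀ k : ℕ,
      (∀ x ∈ GammaTilde0 (n := n), Dk k x ∈ Metric.ball (0 : ℝ × EuclideanSpace ℝ (Fin n)) r) →
      (∀ i ≤ ⌊m⌋₊, ∀ x ∈ GammaTilde0 (n := n),
        ‖iteratedFDerivWithin ℝ i (fun y => θ (Dk k y)) (Dk k ⁻¹' Metric.ball 0 r) x‖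
          ≤ D * (2 : ℝ) ^ (-(k : ℝ) * (2 + min (m - 2) 1))) ∧
      (∀ x ∈ GammaTilde0 (n := n), ∀ y ∈ GammaTilde0 (n := n),
        ‖iteratedFDerivWithin ℝ (⌊m⌋₊) (fun z => θ (Dk k z)) (Dk k ⁻¹' Metric.ball 0 r) x
          - iteratedFDerivWithin ℝ (⌊m⌋₊) (fun z => θ (Dk k z)) (Dk k ⁻¹' Metric.ball 0 r) y‖
          ≤ D * (2 : ℝ) ^ (-(k : ℝ) * (2 + min (m - 2) 1)) * ‖x - y‖ ^ (m - ⌊m⌋₊)) := by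
  have h0 : (0 : ℝ × EuclideanSpace ℝ (Fin n)) ∈ ball 0 r := mem_ball_self hr
  have hflat : ∀ j ≤ 2, iteratedFDerivWithin ℝ j θ (ball 0 r) 0 = 0 := by
    intro j hj
    interval_cases j
    · ext; simp [hθ0]
    · exact norm_eq_zero.1 <| by
        rw [norm_iteratedFDerivWithin_one _ (isOpen_ball.uniqueDiffOn 0 h0), hθ1, norm_zero]
    · exact hθ2
  obtain ⟨C, hC, hCθ⟩ := exists_norm_iteratedFDerivWithin_le_of_flat (p := 2)
    (by exact_mod_cast hm) hreg (convex_ball 0 r) isOpen_ball.uniqueDiffOn h0 hbdd hHol hflat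
  obtain ⟨B, hB, hBθ⟩ := exists_forall_norm_iteratedFDerivWithin_le hbdd
  obtain ⟨H, hH⟩ := hHol
  have hν0 : 0 ≤ min (m - 2) 1 := le_min (by linarith) zero_le_one
  have hτ : 0 ≤ m - ⌊m⌋₊ := sub_nonneg.2 (Nat.floor_le (by linarith))
  refine ⟨8 * C + B + max H 0 + 1, by positivity, fun k hk =>
    ⟨fun i hi x hx => ?_, fun x hx y hy => ?_⟩⟩
  · refine (norm_iteratedFDerivWithin_comp_Dk_le isOpen_ball hreg hC hB hν0 (min_le_right _ _)
      (by simpa using hCθ) hBθ hx (hk x hx) hi).trans ?_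
    gcongr ?_ * _
    linarith [le_max_right H 0]
  · refine (norm_sub_iteratedFDerivWithin_comp_Dk_le isOpen_ball hreg (le_max_right H 0) hτ
      (a := 2 + min (m - 2) 1)
      (by linarith [min_le_left (m - 2) 1]) (fun x hx y hy => (hH x hx y hy).trans
        (by gcongr; exact le_max_left H 0)) (hk x hx) (hk y hy)).trans ?_
    gcongr ?_ * _ * _
    linarith

/-- If `θ ∈ C_b^m(B_r)` with `m > 2`, `θ 0 = 0`, and all first and second derivatives of
`θ` vanish at `0`, then with `ν = min(m-2,1)` there is `D > 0` such that for all `k` with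
`D_k(Γ̃₀) ⊆ B_r`, the derivatives of `θ_k = θ ∘ D_k` of order `≤ ⌊m⌋` are bounded by
`D·2^{-k(2+ν)}` on `Γ̃₀`, and those of order `⌊m⌋` are `(m-⌊m⌋)`-Hölder with constant
`D·2^{-k(2+ν)}`. -/
theorem stmt16 {n : ℕ} (hn : 1 ≤ n) (r : ℝ) (hr : 0 < r) (m : ℝ) (hm : 2 < m)
    (θ : ℝ × EuclideanSpace ℝ (Fin n) → ℂ)
    (hreg : ContDiffOn ℝ (⌊m⌋₊ : ℕ) θ (Metric.ball 0 r))
    (hbdd : ∀ i ≤ ⌊m⌋₊, ∃ M : ℝ,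
      ∀ x ∈ Metric.ball (0 : ℝ × EuclideanSpace ℝ (Fin n)) r,
        ‖iteratedFDerivWithin ℝ i θ (Metric.ball 0 r) x‖ ≤ M)
    (hHol : ∃ H : ℝ, ∀ x ∈ Metric.ball (0 : ℝ × EuclideanSpace ℝ (Fin n)) r,
      ∀ y ∈ Metric.ball (0 : ℝ × EuclideanSpace ℝ (Fin n)) r,
        ‖iteratedFDerivWithin ℝ (⌊m⌋₊) θ (Metric.ball 0 r) x
          - iteratedFDerivWithin ℝ (⌊m⌋₊) θ (Metric.ball 0 r) y‖
          ≤ H * ‖x - y‖ ^ (m - ⌊m⌋₊))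
    (hθ0 : θ 0 = 0)
    (hθ1 : fderivWithin ℝ θ (Metric.ball 0 r) 0 = 0)
    (hθ2 : iteratedFDerivWithin ℝ 2 θ (Metric.ball 0 r) 0 = 0) :
    ∃ D > (0 : ℝ), ∀ k : ℕ,
      (∀ x ∈ GammaTilde0 (n := n), Dk k x ∈ Metric.ball (0 : ℝ × EuclideanSpace ℝ (Fin n)) r) →
      (∀ i ≤ ⌊m⌋₊, ∀ x ∈ GammaTilde0 (n := n),
        ‖iteratedFDerivWithin ℝ i (fun y => θ (Dk k y)) (Dk k ⁻¹' Metric.ball 0 r) x‖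
          ≤ D * (2 : ℝ) ^ (-(k : ℝ) * (2 + min (m - 2) 1))) ∧
      (∀ x ∈ GammaTilde0 (n := n), ∀ y ∈ GammaTilde0 (n := n),
        ‖iteratedFDerivWithin ℝ (⌊m⌋₊) (fun z => θ (Dk k z)) (Dk k ⁻¹' Metric.ball 0 r) x
          - iteratedFDerivWithin ℝ (⌊m⌋₊) (fun z => θ (Dk k z)) (Dk k ⁻¹' Metric.ball 0 r) y‖
          ≤ D * (2 : ℝ) ^ (-(k : ℝ) * (2 + min (m - 2) 1)) * ‖x - y‖ ^ (m - ⌊m⌋₊)) :=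
  stmt16_general r hr m hm θ hreg hbdd hHol hθ0 hθ1 hθ2
end
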